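/- arXiv:2406.03628 — 4 statements merged into one kernel-verified Lean document; each statement's English description precedes it below -/
import Mathlib

section
/- For any real number B > 0, any real x with |x| ≤ B, and any integers s, t, the function φ_B(x; s, t) := -4B·σ(x/(4B) + t - s + 1/2) + 8B·σ(x/(4B) + t - s + 1/4) - 8B·σ(x/(4B) + t - s - 1/4) + 4B·σ(x/(4B) + t - s - 1/2), where σ(y) = max(y, 0) is the ReLU function, satisfies φ_B(x; s, t) = x if s = t and φ_B(x; s, t) = 0 if s ≠ t. -/
noncomputable def relu : ℝ → ℝ := fun y => max y 0

theorem stmt0 (B x : ℝ) (hB : 0 < B) (hx : |x| ≤ B) (s t : ℤ) :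
    -4 * B * relu (x / (4 * B) + (t : ℝ) - (s : ℝ) + 1 / 2)
      + 8 * B * relu (x / (4 * B) + (t : ℝ) - (s : ℝ) + 1 / 4)
      - 8 * B * relu (x / (4 * B) + (t : ℝ) - (s : ℝ) - 1 / 4)
      + 4 * B * relu (x / (4 * B) + (t : ℝ) - (s : ℝ) - 1 / 2)
    = if s = t then x else 0 := by
  obtain ⟨hx1, hx2⟩ := abs_le.mp hx
  have hB4 : (0:ℝ) < 4 * B := by linarith
  have hu1 : x / (4 * B) ≤ 1 / 4 := by
    rw [div_le_iff₀ hB4]; linarith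
  have hu2 : -(1 / 4) ≤ x / (4 * B) := by
    rw [le_div_iff₀ hB4]; linarith
  simp only [relu]
  rcases eq_or_ne s t with h | h
  · subst h
    rw [max_eq_left (by linarith), max_eq_left (by linarith),
      max_eq_right (by linarith), max_eq_right (by linarith)]
    simp only [if_pos rfl, if_true]
    field_simp
    ring
  · rw [if_neg h]
    rcases lt_or_gt_of_ne h with hlt | hlt
    · -- s < t, so (t:ℝ) - s ≥ 1, all arguments positive
      have : (1:ℝ) ≤ (t:ℝ) - (s:ℝ) := by
        have : s + 1 ≤ t := hlt
        have := (Int.cast_le (R := ℝ)).mpr this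
        push_cast at this; linarith
      rw [max_eq_left (by linarith), max_eq_left (by linarith),
        max_eq_left (by linarith), max_eq_left (by linarith)]
      ring
    · -- t < s, so (t:ℝ) - s ≤ -1, all arguments negative
      have : (t:ℝ) - (s:ℝ) ≤ -1 := by
        have : t + 1 ≤ s := hlt
        have := (Int.cast_le (R := ℝ)).mpr this
        push_cast at this; linarith
      rw [max_eq_right (by linarith), max_eq_right (by linarith),
        max_eq_right (by linarith), max_eq_right (by linarith)]
      ring
end

section
/- Let p ≥ 2 be an integer and let (ω_j)_{j≥1} be positive reals satisfying c₂·j^p ≤ ω_j for all j ≥ 1, with some constant c₂ > 0. For λ ∈ (0, 1), define s_j = 1/(1 + λ·ω_j). Then there exists a constant C (depending only on p and c₂) such that ∑_{j=1}^∞ s_j² ≤ C·λ^{−1/p}. -/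
theorem stmt9 (p : ℕ) (hp : 2 ≤ p) (c₂ : ℝ) (hc₂ : 0 < c₂) :
    ∃ C : ℝ, ∀ (ω : ℕ → ℝ) (lam : ℝ),
      (∀ j : ℕ, 1 ≤ j → 0 < ω j) →
      (∀ j : ℕ, 1 ≤ j → c₂ * (j : ℝ) ^ p ≤ ω j) →
      0 < lam → lam < 1 →
      (∑' j : ℕ, (1 / (1 + lam * ω (j + 1))) ^ 2) ≤ C * lam ^ (-(1 : ℝ) / p) := by
  refine ⟨2 + c₂⁻¹, ?_⟩
  intro ω lam hω hbound hlam hlam1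
  have hp0 : 0 < p := by omega
  have hppos : (0:ℝ) < (p:ℝ) := by exact_mod_cast hp0
  set A : ℝ := lam ^ (-(1 : ℝ) / p) with hA
  have hA1 : 1 ≤ A :=
    Real.one_le_rpow_of_pos_of_le_one_of_nonpos hlam hlam1.le
      (by rw [neg_div]; exact neg_nonpos.mpr (by positivity))
  have hApos : 0 < A := lt_of_lt_of_le one_pos hA1
  set N : ℕ := ⌈A⌉₊ with hN
  have hNA : A ≤ (N:ℝ) := Nat.le_ceil A
  have hN1 : 1 ≤ N := Nat.one_le_ceil_iff.mpr hApos
  have hNpos : (0:ℝ) < (N:ℝ) := by exact_mod_cast hN1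
  have hN2A : (N:ℝ) ≤ 2 * A := by
    have := Nat.ceil_lt_add_one (le_of_lt hApos)
    have h2 : (N:ℝ) < A + 1 := this
    linarith
  set f : ℕ → ℝ := fun j => (1 / (1 + lam * ω (j + 1))) ^ 2 with hf
  have hden : ∀ j : ℕ, 0 < 1 + lam * ω (j + 1) := by
    intro j
    have := hω (j+1) (by omega)
    nlinarith
  have hnn : ∀ j, 0 ≤ f j := fun j => sq_nonneg _
  have hs1 : ∀ j : ℕ, 1 / (1 + lam * ω (j + 1)) ≤ 1 := by
    intro j
    have h := hden j
    have hω' := hω (j+1) (by omega)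
    rw [div_le_one h]; nlinarith
  have hs0 : ∀ j : ℕ, 0 ≤ 1 / (1 + lam * ω (j + 1)) := by
    intro j; have := hden j; positivity
  have hterm1 : ∀ j, f j ≤ 1 := fun j => pow_le_one₀ (hs0 j) (hs1 j)
  have hterm2 : ∀ j : ℕ, f j ≤ (lam * c₂ * ((j:ℝ)+1) ^ p)⁻¹ := by
    intro j
    have h := hden j
    have hb := hbound (j+1) (by omega)
    have hjp : (0:ℝ) < ((j:ℝ)+1) ^ p := by positivity
    have hkey : lam * c₂ * ((j:ℝ)+1) ^ p ≤ 1 + lam * ω (j + 1) := by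
      have hb' : c₂ * ((j:ℝ)+1) ^ p ≤ ω (j+1) := by push_cast at hb; linarith
      nlinarith
    have hs : 1 / (1 + lam * ω (j + 1)) ≤ (lam * c₂ * ((j:ℝ)+1) ^ p)⁻¹ := by
      rw [one_div]
      exact inv_anti₀ (by positivity) hkey
    calc f j ≤ 1 / (1 + lam * ω (j + 1)) := by
              have h0 := hs0 j; have h1 := hs1 j
              simp only [hf, sq]
              nlinarith
      _ ≤ _ := hs
  -- summability
  have hsum : Summable f := by
    apply Summable.of_nonneg_of_le hnn hterm2
    have hbase : Summable (fun n : ℕ => 1 / (n:ℝ) ^ p) :=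
      Real.summable_one_div_nat_pow.mpr hp
    have hshift : Summable (fun j : ℕ => 1 / ((j:ℝ)+1) ^ p) := by
      have := (summable_nat_add_iff 1).mpr hbase
      simpa [Nat.cast_add] using this
    have := hshift.mul_left (lam * c₂)⁻¹
    apply this.congr
    intro j
    rw [mul_inv_rev, one_div]
    ring
  -- split the sum
  have hsplit : (∑' j, f j) = ∑ i ∈ Finset.range N, f i + ∑' i, f (i + N) :=
    (Summable.sum_add_tsum_nat_add N hsum).symm
  -- head bound
  have hhead : ∑ i ∈ Finset.range N, f i ≤ (N:ℝ) := by
    calc ∑ i ∈ Finset.range N, f i ≤ ∑ i ∈ Finset.range N, 1 :=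
          Finset.sum_le_sum fun i _ => hterm1 i
      _ = (N:ℝ) := by simp
  -- tail bound
  have hNp2 : (0:ℝ) < (N:ℝ) ^ (p-2) := by positivity
  have htail : (∑' i, f (i + N)) ≤ (lam * c₂ * (N:ℝ) ^ (p-1))⁻¹ := by
    apply Real.tsum_le_of_sum_range_le (fun n => hnn _)
    intro n
    have hstep : ∀ i : ℕ, f (i + N) ≤
        (lam * c₂ * (N:ℝ) ^ (p-2))⁻¹ * (((i:ℝ)+N)⁻¹ - ((i:ℝ)+1+N)⁻¹) := by
      intro i
      have h1 : f (i + N) ≤ (lam * c₂ * (((i+N:ℕ):ℝ)+1) ^ p)⁻¹ := hterm2 (i+N)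
      have hx : (0:ℝ) < (i:ℝ) + N := by positivity
      have hx1 : (0:ℝ) < (i:ℝ) + N + 1 := by linarith
      have hpow : (N:ℝ) ^ (p-2) * (((i:ℝ)+N) * ((i:ℝ)+N+1)) ≤ ((i:ℝ)+N+1) ^ p := by
        have e1 : ((i:ℝ)+N+1) ^ p = ((i:ℝ)+N+1) ^ (p-2) * ((i:ℝ)+N+1) ^ 2 := by
          rw [← pow_add]; congr 1; omega
        have e2 : (N:ℝ) ^ (p-2) ≤ ((i:ℝ)+N+1) ^ (p-2) :=
          pow_le_pow_left₀ hNpos.le (by linarith) _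
        have e3 : ((i:ℝ)+N) * ((i:ℝ)+N+1) ≤ ((i:ℝ)+N+1) ^ 2 := by nlinarith
        rw [e1]
        calc (N:ℝ) ^ (p-2) * (((i:ℝ)+N) * ((i:ℝ)+N+1))
            ≤ ((i:ℝ)+N+1) ^ (p-2) * (((i:ℝ)+N) * ((i:ℝ)+N+1)) := by
              apply mul_le_mul_of_nonneg_right e2; positivity
          _ ≤ ((i:ℝ)+N+1) ^ (p-2) * ((i:ℝ)+N+1) ^ 2 := by
              apply mul_le_mul_of_nonneg_left e3; positivity
      have h2 : (lam * c₂ * (((i+N:ℕ):ℝ)+1) ^ p)⁻¹ ≤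
          (lam * c₂ * ((N:ℝ) ^ (p-2) * (((i:ℝ)+N) * ((i:ℝ)+N+1))))⁻¹ := by
        apply inv_anti₀ (by positivity)
        push_cast
        have : lam * c₂ * ((N:ℝ) ^ (p-2) * (((i:ℝ)+N) * ((i:ℝ)+N+1))) ≤
            lam * c₂ * (((i:ℝ)+N+1) ^ p) := by
          apply mul_le_mul_of_nonneg_left hpow; positivity
        linarith
      have hdiff : (((i:ℝ)+N) * ((i:ℝ)+N+1))⁻¹ = ((i:ℝ)+N)⁻¹ - ((i:ℝ)+1+N)⁻¹ := by
        rw [eq_sub_iff_add_eq]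
        field_simp
        ring
      calc f (i + N) ≤ (lam * c₂ * (((i+N:ℕ):ℝ)+1) ^ p)⁻¹ := h1
        _ ≤ (lam * c₂ * ((N:ℝ) ^ (p-2) * (((i:ℝ)+N) * ((i:ℝ)+N+1))))⁻¹ := h2
        _ = (lam * c₂ * (N:ℝ) ^ (p-2))⁻¹ * (((i:ℝ)+N)⁻¹ - ((i:ℝ)+1+N)⁻¹) := by
            rw [← hdiff, ← mul_assoc, mul_inv]
    calc ∑ i ∈ Finset.range n, f (i + N)
        ≤ ∑ i ∈ Finset.range n,
            (lam * c₂ * (N:ℝ) ^ (p-2))⁻¹ * (((i:ℝ)+N)⁻¹ - ((i:ℝ)+1+N)⁻¹) :=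
          Finset.sum_le_sum fun i _ => hstep i
      _ = (lam * c₂ * (N:ℝ) ^ (p-2))⁻¹ * ∑ i ∈ Finset.range n,
            (((i:ℝ)+N)⁻¹ - ((i:ℝ)+1+N)⁻¹) := by rw [Finset.mul_sum]
      _ = (lam * c₂ * (N:ℝ) ^ (p-2))⁻¹ * (((0:ℝ)+N)⁻¹ - ((n:ℝ)+N)⁻¹) := by
          congr 1
          have h := Finset.sum_range_sub' (fun i : ℕ => ((i:ℝ)+(N:ℝ))⁻¹) n
          simp only [Nat.cast_add, Nat.cast_one, Nat.cast_zero] at h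
          rw [← h]
      _ ≤ (lam * c₂ * (N:ℝ) ^ (p-2))⁻¹ * (N:ℝ)⁻¹ := by
          apply mul_le_mul_of_nonneg_left _ (by positivity)
          have : (0:ℝ) ≤ ((n:ℝ)+N)⁻¹ := by positivity
          simp only [zero_add]
          linarith
      _ = (lam * c₂ * (N:ℝ) ^ (p-1))⁻¹ := by
          rw [← mul_inv]
          congr 1
          rw [mul_assoc, ← pow_succ]
          have hpe : p - 2 + 1 = p - 1 := by omega
          rw [hpe]
  -- final bound
  have hfin : (lam * c₂ * (N:ℝ) ^ (p-1))⁻¹ ≤ c₂⁻¹ * A := by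
    have hcast : ((p-1:ℕ):ℝ) = (p:ℝ) - 1 := by
      have : 1 ≤ p := by omega
      push_cast [this]
      ring
    have hexp : (1:ℝ) + (-(1:ℝ)/p) * ((p-1:ℕ):ℝ) = (1:ℝ)/p := by
      rw [hcast]
      field_simp
      ring
    have hlpow : lam * A ^ (p-1) = lam ^ ((1:ℝ)/p) := by
      rw [hA, ← Real.rpow_natCast (lam ^ (-(1 : ℝ) / p)) (p-1), ← Real.rpow_mul hlam.le]
      nth_rewrite 1 [← Real.rpow_one lam]
      rw [← Real.rpow_add hlam, hexp]
    have h1 : A ^ (p-1) ≤ (N:ℝ) ^ (p-1) := pow_le_pow_left₀ hApos.le hNA _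
    have h2 : c₂ * lam ^ ((1:ℝ)/p) ≤ lam * c₂ * (N:ℝ) ^ (p-1) := by
      have hm : lam * c₂ * A^(p-1) ≤ lam * c₂ * (N:ℝ)^(p-1) := by
        apply mul_le_mul_of_nonneg_left h1 (by positivity)
      have e : lam * c₂ * A^(p-1) = c₂ * lam ^ ((1:ℝ)/p) := by
        rw [mul_comm lam c₂, mul_assoc, hlpow]
      linarith
    have hpos2 : (0:ℝ) < c₂ * lam ^ ((1:ℝ)/p) := by positivity
    calc (lam * c₂ * (N:ℝ)^(p-1))⁻¹ ≤ (c₂ * lam ^ ((1:ℝ)/p))⁻¹ := inv_anti₀ hpos2 h2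
      _ = c₂⁻¹ * A := by
          rw [mul_inv, hA, neg_div, Real.rpow_neg hlam.le]
  calc (∑' j, f j) = ∑ i ∈ Finset.range N, f i + ∑' i, f (i + N) := hsplit
    _ ≤ (N:ℝ) + (lam * c₂ * (N:ℝ) ^ (p-1))⁻¹ := add_le_add hhead htail
    _ ≤ 2 * A + c₂⁻¹ * A := add_le_add hN2A hfin
    _ = (2 + c₂⁻¹) * A := by ring
end

section
/- Let X be a chi-squared random variable with r degrees of freedom. Then for every ε > 0, P(X ≥ r + 2√(rε) + 2ε) ≤ exp(−ε); in particular, taking ε = (log d)² for d ≥ 2, P(X ≥ (√r + 2 log d)²) ≤ exp(−(log d)²) — using r + 2√r·(log d)² is replaced via 2√(r·(log d)²) = 2√r·log d so that r + 2√r log d + 2(log d)² ≤ (√r + 2 log d)². -/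
open MeasureTheory ProbabilityTheory

open scoped ENNReal NNReal
section Aux
open Real

lemma gauss_sq_integrable {t : ℝ} (ht : t < 1/2) :
    Integrable (fun x => Real.exp (t * x^2)) (gaussianReal 0 1) := by
  rw [gaussianReal_of_var_ne_zero 0 one_ne_zero]
  have hpdf : (gaussianPDF 0 1) = fun x => ((gaussianPDFReal 0 1 x).toNNReal : ℝ≥0∞) := by
    funext x; rw [gaussianPDF_def]; rfl
  rw [hpdf, integrable_withDensity_iff_integrable_smul
    ((measurable_gaussianPDFReal 0 1).real_toNNReal)]
  have heq : (fun x => (gaussianPDFReal 0 1 x).toNNReal • Real.exp (t * x^2))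
      = fun x => (Real.sqrt (2 * π))⁻¹ * Real.exp (-(1/2 - t) * x^2) := by
    funext x
    rw [NNReal.smul_def, smul_eq_mul, Real.coe_toNNReal _ (gaussianPDFReal_nonneg 0 1 x)]
    rw [gaussianPDFReal_def]
    rw [mul_assoc, ← Real.exp_add]
    norm_num
    ring_nf
    simp
  rw [heq]
  exact (integrable_exp_neg_mul_sq (by linarith)).const_mul _

lemma gauss_sq_integral {t : ℝ} (ht : t < 1/2) :
    ∫ x, Real.exp (t * x^2) ∂(gaussianReal 0 1) = (Real.sqrt (1 - 2*t))⁻¹ := by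
  rw [gaussianReal_of_var_ne_zero 0 one_ne_zero]
  have hpdf : (gaussianPDF 0 1) = fun x => ((gaussianPDFReal 0 1 x).toNNReal : ℝ≥0∞) := by
    funext x; rw [gaussianPDF_def]; rfl
  rw [hpdf, integral_withDensity_eq_integral_smul
    ((measurable_gaussianPDFReal 0 1).real_toNNReal)]
  have heq : (fun x => (gaussianPDFReal 0 1 x).toNNReal • Real.exp (t * x^2))
      = fun x => (Real.sqrt (2 * π))⁻¹ * Real.exp (-(1/2 - t) * x^2) := by
    funext x
    rw [NNReal.smul_def, smul_eq_mul, Real.coe_toNNReal _ (gaussianPDFReal_nonneg 0 1 x)]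
    rw [gaussianPDFReal_def]
    rw [mul_assoc, ← Real.exp_add]
    norm_num
    ring_nf
    simp
  rw [heq, integral_const_mul, integral_gaussian]
  rw [← Real.sqrt_inv, ← Real.sqrt_mul (by positivity), ← Real.sqrt_inv]
  congr 1
  have h2 : (0:ℝ) < 1/2 - t := by linarith
  have h3 : (1:ℝ) - 2*t ≠ 0 := by linarith
  have h4 : π * 2 - π * t * 4 ≠ 0 := by
    have := pi_pos; nlinarith
  field_simp

lemma lintegral_pi_prod (μ : Measure ℝ) [SigmaFinite μ] {f : ℝ → ℝ≥0∞} (hf : Measurable f) :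
    ∀ n : ℕ, ∫⁻ x : Fin n → ℝ, ∏ i, f (x i) ∂(Measure.pi fun _ => μ)
      = (∫⁻ x, f x ∂μ) ^ n := by
  intro n
  induction n with
  | zero => simp [Measure.pi_of_empty (fun _ : Fin 0 => μ)]
  | succ n ih =>
    have hmp := measurePreserving_piFinSuccAbove (fun _ : Fin (n+1) => μ) 0
    set e := MeasurableEquiv.piFinSuccAbove (fun _ : Fin (n+1) => ℝ) 0 with he
    have hg : Measurable (fun y : ℝ × (Fin n → ℝ) => f y.1 * ∏ i, f (y.2 i)) := by
      exact (hf.comp measurable_fst).mul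
        (Finset.measurable_prod _ (fun i _ => hf.comp ((measurable_pi_apply i).comp measurable_snd)))
    calc ∫⁻ x : Fin (n+1) → ℝ, ∏ i, f (x i) ∂(Measure.pi fun _ => μ)
        = ∫⁻ x : Fin (n+1) → ℝ, (fun y : ℝ × (Fin n → ℝ) => f y.1 * ∏ i, f (y.2 i)) (e x)
            ∂(Measure.pi fun _ => μ) := by
          refine lintegral_congr fun x => ?_
          simp [he, MeasurableEquiv.piFinSuccAbove_apply, Fin.insertNthEquiv,
            Fin.zero_succAbove, Fin.prod_univ_succ, Fin.tail]
      _ = ∫⁻ y : ℝ × (Fin n → ℝ), f y.1 * ∏ i, f (y.2 i) ∂(μ.prod (Measure.pi fun _ => μ)) :=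
          hmp.lintegral_comp hg
      _ = (∫⁻ x, f x ∂μ) * (∫⁻ x : Fin n → ℝ, ∏ i, f (x i) ∂(Measure.pi fun _ => μ)) :=
          lintegral_prod_mul hf.aemeasurable
            (Finset.measurable_prod _ (fun i _ => hf.comp (measurable_pi_apply i))).aemeasurable
      _ = (∫⁻ x, f x ∂μ) ^ (n+1) := by rw [ih, pow_succ, mul_comm]

lemma gauss_sq_lintegral {t : ℝ} (ht : t < 1/2) :
    ∫⁻ x, ENNReal.ofReal (Real.exp (t * x^2)) ∂(gaussianReal 0 1)
      = ENNReal.ofReal ((Real.sqrt (1 - 2*t))⁻¹) := by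
  rw [← ofReal_integral_eq_lintegral_ofReal (gauss_sq_integrable ht)
    (Filter.Eventually.of_forall fun x => (Real.exp_pos _).le), gauss_sq_integral ht]

lemma chernoff (n : ℕ) {t a : ℝ} (ht0 : 0 ≤ t) (ht : t < 1/2) :
    (Measure.pi fun _ : Fin n => gaussianReal 0 1) {u | a ≤ ∑ i, (u i)^2}
      ≤ ENNReal.ofReal (Real.exp (-(t*a)) * ((Real.sqrt (1 - 2*t))⁻¹)^n) := by
  set μ := Measure.pi fun _ : Fin n => gaussianReal 0 1
  set g : (Fin n → ℝ) → ℝ≥0∞ := fun u => ENNReal.ofReal (Real.exp (t * ∑ i, (u i)^2))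
  have hgm : Measurable g := by
    apply ENNReal.measurable_ofReal.comp
    apply Real.measurable_exp.comp
    exact (Finset.measurable_sum _ fun i _ => (measurable_pi_apply i).pow_const 2).const_mul t
  have hsub : {u : Fin n → ℝ | a ≤ ∑ i, (u i)^2}
      ⊆ {u | ENNReal.ofReal (Real.exp (t * a)) ≤ g u} := by
    intro u hu
    exact ENNReal.ofReal_le_ofReal (Real.exp_le_exp.2 (mul_le_mul_of_nonneg_left hu ht0))
  have hint : ∫⁻ u, g u ∂μ = (ENNReal.ofReal ((Real.sqrt (1 - 2*t))⁻¹))^n := by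
    have hfm : Measurable (fun x : ℝ => ENNReal.ofReal (Real.exp (t * x^2))) :=
      ENNReal.measurable_ofReal.comp
        (Real.measurable_exp.comp ((measurable_id.pow_const 2).const_mul t))
    have heq : ∀ u : Fin n → ℝ,
        g u = ∏ i, (fun x => ENNReal.ofReal (Real.exp (t * x^2))) (u i) := by
      intro u
      simp only [g]
      rw [Finset.mul_sum, Real.exp_sum]
      exact ENNReal.ofReal_prod_of_nonneg (fun i _ => (Real.exp_pos _).le)
    calc ∫⁻ u, g u ∂μ
        = ∫⁻ u : Fin n → ℝ, ∏ i, (fun x => ENNReal.ofReal (Real.exp (t * x^2))) (u i)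
            ∂(Measure.pi fun _ => gaussianReal 0 1) := lintegral_congr heq
      _ = _ := by rw [lintegral_pi_prod _ hfm, gauss_sq_lintegral ht]
  have hmark := mul_meas_ge_le_lintegral₀ (μ := μ) hgm.aemeasurable (ENNReal.ofReal (Real.exp (t * a)))
  rw [hint] at hmark
  have hμle : μ {u | a ≤ ∑ i, (u i)^2} ≤ μ {u | ENNReal.ofReal (Real.exp (t * a)) ≤ g u} :=
    measure_mono hsub
  have hc0 : ENNReal.ofReal (Real.exp (t * a)) ≠ 0 := by
    simp [Real.exp_pos]
  have hctop : ENNReal.ofReal (Real.exp (t * a)) ≠ ⊤ := ENNReal.ofReal_ne_top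
  calc μ {u | a ≤ ∑ i, (u i)^2}
      ≤ μ {u | ENNReal.ofReal (Real.exp (t * a)) ≤ g u} := hμle
    _ ≤ (ENNReal.ofReal ((Real.sqrt (1 - 2*t))⁻¹))^n / ENNReal.ofReal (Real.exp (t * a)) := by
        rw [ENNReal.le_div_iff_mul_le (Or.inl hc0) (Or.inl hctop), mul_comm]
        exact hmark
    _ = ENNReal.ofReal (Real.exp (-(t*a)) * ((Real.sqrt (1 - 2*t))⁻¹)^n) := by
        rw [ENNReal.ofReal_mul (Real.exp_pos _).le, ← ENNReal.ofReal_pow (by positivity)]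
        rw [div_eq_mul_inv, mul_comm]
        congr 1
        rw [Real.exp_neg, ENNReal.ofReal_inv_of_pos (Real.exp_pos _)]

lemma log_ineq {u : ℝ} (hu : 0 ≤ u) :
    Real.log (1+2*u) ≤ 2*(u*(1+u)/(1+2*u)) := by
  have h0 : (0:ℝ) < 1+2*u := by linarith
  have h1 : Real.log (1+2*u) ≤ Real.sinh (Real.log (1+2*u)) :=
    Real.self_le_sinh_iff.2 (Real.log_nonneg (by linarith))
  rw [Real.sinh_log h0] at h1
  refine h1.trans (le_of_eq ?_)
  field_simp
  ring

lemma key (n : ℕ) {u : ℝ} (hu : 0 < u) :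
    Real.exp (-(u/(1+2*u) * ((n:ℝ) + 2*((n:ℝ)*u) + 2*((n:ℝ)*u^2))))
      * ((Real.sqrt (1-2*(u/(1+2*u))))⁻¹)^n ≤ Real.exp (-((n:ℝ)*u^2)) := by
  have h0 : (0:ℝ) < 1+2*u := by linarith
  have ht : 1 - 2*(u/(1+2*u)) = (1+2*u)⁻¹ := by field_simp; ring
  rw [ht, Real.sqrt_inv, inv_inv]
  set b : ℝ := u*(1+u)/(1+2*u) with hb
  have hlog : Real.log (1+2*u) ≤ 2*b := log_ineq hu.le
  have h1 : Real.sqrt (1+2*u) ≤ Real.exp b := by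
    have h2 : 1+2*u ≤ Real.exp b ^ 2 := by
      calc 1+2*u = Real.exp (Real.log (1+2*u)) := (Real.exp_log h0).symm
        _ ≤ Real.exp (2*b) := Real.exp_le_exp.2 hlog
        _ = Real.exp b ^ 2 := by
            rw [← Real.exp_nat_mul]; norm_num
    calc Real.sqrt (1+2*u) ≤ Real.sqrt (Real.exp b ^ 2) := Real.sqrt_le_sqrt h2
      _ = Real.exp b := Real.sqrt_sq (Real.exp_pos b).le
  have h3 : Real.sqrt (1+2*u) ^ n ≤ Real.exp ((n:ℝ) * b) := by
    rw [Real.exp_nat_mul]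
    exact pow_le_pow_left₀ (Real.sqrt_nonneg _) h1 n
  calc Real.exp (-(u/(1+2*u) * ((n:ℝ) + 2*((n:ℝ)*u) + 2*((n:ℝ)*u^2)))) * Real.sqrt (1+2*u) ^ n
      ≤ Real.exp (-(u/(1+2*u) * ((n:ℝ) + 2*((n:ℝ)*u) + 2*((n:ℝ)*u^2)))) * Real.exp ((n:ℝ)*b) :=
        mul_le_mul_of_nonneg_left h3 (Real.exp_pos _).le
    _ = Real.exp (-(u/(1+2*u) * ((n:ℝ) + 2*((n:ℝ)*u) + 2*((n:ℝ)*u^2))) + (n:ℝ)*b) :=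
        (Real.exp_add _ _).symm
    _ = Real.exp (-((n:ℝ)*u^2)) := by
        congr 1
        rw [hb]
        field_simp
        ring

end Aux

theorem stmt15 (r : ℕ) (hr : 0 < r) :
    (∀ ε : ℝ, 0 < ε →
      (Measure.pi fun _ : Fin r => gaussianReal 0 1)
          {u | (r : ℝ) + 2 * Real.sqrt (r * ε) + 2 * ε ≤ ∑ i, (u i) ^ 2}
        ≤ ENNReal.ofReal (Real.exp (-ε))) ∧
    (∀ d : ℝ, 2 ≤ d →
      (Measure.pi fun _ : Fin r => gaussianReal 0 1)
          {u | (Real.sqrt r + 2 * Real.log d) ^ 2 ≤ ∑ i, (u i) ^ 2}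
        ≤ ENNReal.ofReal (Real.exp (-(Real.log d) ^ 2))) := by

  have hrpos : (0:ℝ) < r := Nat.cast_pos.2 hr
  have part1 : ∀ ε : ℝ, 0 < ε →
      (Measure.pi fun _ : Fin r => gaussianReal 0 1)
          {u | (r : ℝ) + 2 * Real.sqrt (r * ε) + 2 * ε ≤ ∑ i, (u i) ^ 2}
        ≤ ENNReal.ofReal (Real.exp (-ε)) := by
    intro ε hε
    set u : ℝ := Real.sqrt (ε / r) with hudef
    have hu : 0 < u := Real.sqrt_pos.2 (by positivity)
    have hu2 : (r:ℝ) * u^2 = ε := by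
      rw [hudef, Real.sq_sqrt (by positivity)]
      field_simp
    have hru : Real.sqrt ((r:ℝ) * ε) = (r:ℝ) * u := by
      rw [show (r:ℝ)*ε = ((r:ℝ)*u)^2 by rw [mul_pow, ← hu2]; ring]
      exact Real.sqrt_sq (by positivity)
    have ht0 : 0 ≤ u/(1+2*u) := by positivity
    have ht : u/(1+2*u) < 1/2 := by
      rw [div_lt_iff₀ (by linarith)]
      linarith
    refine (chernoff r ht0 ht).trans ?_
    apply ENNReal.ofReal_le_ofReal
    have := key r hu
    rw [hu2] at this
    calc Real.exp (-(u/(1+2*u) * ((r:ℝ) + 2 * Real.sqrt (r * ε) + 2 * ε)))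
          * ((Real.sqrt (1-2*(u/(1+2*u))))⁻¹)^r
        = Real.exp (-(u/(1+2*u) * ((r:ℝ) + 2*((r:ℝ)*u) + 2*((r:ℝ)*u^2))))
          * ((Real.sqrt (1-2*(u/(1+2*u))))⁻¹)^r := by rw [hru, hu2]
      _ ≤ Real.exp (-ε) := by rw [← hu2]; exact key r hu
  refine ⟨part1, ?_⟩
  intro d hd
  have hL : 0 < Real.log d := Real.log_pos (by linarith)
  have hsub : {u : Fin r → ℝ | (Real.sqrt r + 2 * Real.log d) ^ 2 ≤ ∑ i, (u i) ^ 2}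
      ⊆ {u | (r : ℝ) + 2 * Real.sqrt (r * (Real.log d)^2) + 2 * (Real.log d)^2
          ≤ ∑ i, (u i) ^ 2} := by
    intro u hu
    simp only [Set.mem_setOf_eq] at hu ⊢
    refine le_trans ?_ hu
    have h1 : Real.sqrt ((r:ℝ) * (Real.log d)^2) = Real.sqrt r * Real.log d := by
      rw [Real.sqrt_mul (by positivity), Real.sqrt_sq hL.le]
    have h2 : Real.sqrt (r:ℝ) ^ 2 = (r:ℝ) := Real.sq_sqrt hrpos.le
    have h3 : 0 ≤ Real.sqrt (r:ℝ) := Real.sqrt_nonneg _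
    rw [h1]
    nlinarith [mul_nonneg h3 hL.le]
  exact (measure_mono hsub).trans (part1 _ (by positivity))
end

section
/- Let r ≥ 1 be an integer, λ ∈ (0,1), and let (b_j)_{j≥1} be a real sequence such that there is a constant K with ∑_{j > k} b_j² ≤ K·k^{−2r} for all positive integers k. Let p ≥ 2 be an integer and (ω_j) satisfy 0 < ω_j ≤ c·j^p. Define s_j = 1/(1 + λ·ω_j). Then there exist constants C₁, C₂ > 0 (depending only on p, r, c, K) such that ∑_{j=1}^∞ s_j²·b_j² ≥ C₁·∑_{j=1}^∞ b_j² − C₂·λ^{2r/max(p, r)}. -/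
theorem stmt19 (p r : ℕ) (hp : 2 ≤ p) (hr : 1 ≤ r) (c K : ℝ) (hc : 0 < c) :
    ∃ C₁ C₂ : ℝ, 0 < C₁ ∧ 0 < C₂ ∧
      ∀ (b ω : ℕ → ℝ) (lam : ℝ),
        0 < lam → lam < 1 →
        Summable (fun j : ℕ => (b (j + 1)) ^ 2) →
        (∀ k : ℕ, 1 ≤ k →
          (∑' j : ℕ, (b (k + 1 + j)) ^ 2) ≤ K * (k : ℝ) ^ (-(2 * (r : ℝ)))) →
        (∀ j : ℕ, 1 ≤ j → 0 < ω j) →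
        (∀ j : ℕ, 1 ≤ j → ω j ≤ c * (j : ℝ) ^ p) →
        C₁ * (∑' j : ℕ, (b (j + 1)) ^ 2) - C₂ * lam ^ ((2 * (r : ℝ)) / (max p r : ℕ))
          ≤ ∑' j : ℕ, (1 / (1 + lam * ω (j + 1))) ^ 2 * (b (j + 1)) ^ 2 := by
  set m : ℕ := max p r with hmdef
  have hm1 : 1 ≤ m := le_trans hr (le_max_right p r)
  have hM : (0:ℝ) < (m : ℝ) := by exact_mod_cast hm1
  refine ⟨((1+c)⁻¹)^2, ((1+c)⁻¹)^2 * ((|K|+1) * 4^r), by positivity, by positivity, ?_⟩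
  intro b ω lam hlam0 hlam1 hsum htail hωpos hωle
  set L : ℝ := lam ^ ((2 * (r:ℝ)) / (m:ℝ)) with hLdef
  have hL0 : 0 < L := Real.rpow_pos_of_pos hlam0 _
  set x : ℝ := lam ^ (-(1/(m:ℝ))) with hxdef
  have hx0 : 0 < x := Real.rpow_pos_of_pos hlam0 _
  have hx1 : (1:ℝ) ≤ x :=
    Real.one_le_rpow_of_pos_of_le_one_of_nonpos hlam0 hlam1.le
      (neg_nonpos.mpr (by positivity))
  set k : ℕ := ⌊x⌋₊ with hkdef
  have hk1 : 1 ≤ k := Nat.le_floor (by exact_mod_cast hx1)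
  have hkx : (k:ℝ) ≤ x := Nat.floor_le hx0.le
  have hk0 : (0:ℝ) < (k:ℝ) := by exact_mod_cast hk1
  have hk_half : x / 2 ≤ (k:ℝ) := by
    rcases le_or_gt 2 x with h | h
    · have := Nat.sub_one_lt_floor x
      linarith
    · have : (1:ℝ) ≤ (k:ℝ) := by exact_mod_cast hk1
      linarith
  -- key: λ ω_j ≤ c for j ≤ k
  have hxp : x ^ p = lam ^ (-((p:ℝ)/(m:ℝ))) := by
    rw [hxdef, ← Real.rpow_natCast (lam ^ (-(1/(m:ℝ)))) p, ← Real.rpow_mul hlam0.le]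
    congr 1; ring
  have hlamxp : lam * x ^ p ≤ 1 := by
    have heq : lam * x ^ p = lam ^ (1 + -((p:ℝ)/(m:ℝ))) := by
      rw [hxp, Real.rpow_add hlam0, Real.rpow_one]
    rw [heq]
    apply Real.rpow_le_one hlam0.le hlam1.le
    have hpm : (p:ℝ) ≤ (m:ℝ) := by exact_mod_cast le_max_left p r
    have : (p:ℝ)/(m:ℝ) ≤ 1 := by rw [div_le_one hM]; exact hpm
    linarith
  have key : ∀ j : ℕ, 1 ≤ j → j ≤ k → lam * ω j ≤ c := by
    intro j hj1 hjk
    have h1 : ω j ≤ c * (j:ℝ)^p := hωle j hj1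
    have h2 : ((j:ℝ))^p ≤ (k:ℝ)^p :=
      pow_le_pow_left₀ (by positivity) (by exact_mod_cast hjk) p
    have h3 : ((k:ℝ))^p ≤ x^p := pow_le_pow_left₀ hk0.le hkx p
    have h4 : ω j ≤ c * x^p := by nlinarith
    calc lam * ω j ≤ lam * (c * x^p) := mul_le_mul_of_nonneg_left h4 hlam0.le
      _ = c * (lam * x^p) := by ring
      _ ≤ c * 1 := mul_le_mul_of_nonneg_left hlamxp hc.le
      _ = c := by ring
  have hfact : ∀ j : ℕ, (0:ℝ) < 1 + lam * ω (j+1) := fun j => by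
    have := hωpos (j+1) (Nat.le_add_left 1 j)
    nlinarith
  have hsum2 : Summable (fun j : ℕ => (1 / (1 + lam * ω (j + 1))) ^ 2 * (b (j + 1)) ^ 2) := by
    apply hsum.of_nonneg_of_le (fun j => mul_nonneg (sq_nonneg _) (sq_nonneg _))
    intro j
    have h1 : 1 / (1 + lam * ω (j+1)) ≤ 1 := by
      rw [div_le_one (hfact j)]
      have := hωpos (j+1) (Nat.le_add_left 1 j)
      nlinarith
    have h0 : 0 ≤ 1 / (1 + lam * ω (j+1)) := one_div_nonneg.mpr (hfact j).le
    have h2 : (1 / (1 + lam * ω (j+1)))^2 ≤ 1 := pow_le_one₀ h0 h1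
    exact mul_le_of_le_one_left (sq_nonneg _) h2
  -- split the sum
  have hsplit := Summable.sum_add_tsum_nat_add (f := fun j : ℕ => (b (j + 1)) ^ 2) k hsum
  set S : ℝ := ∑' j : ℕ, (b (j + 1)) ^ 2 with hSdef
  set T : ℝ := ∑' j : ℕ, (b (j + k + 1)) ^ 2 with hTdef
  have hsplit' : (∑ j ∈ Finset.range k, (b (j + 1)) ^ 2) = S - T := by
    have : (∑ j ∈ Finset.range k, (b (j + 1)) ^ 2) + T = S := hsplit
    linarith
  -- tail bound
  have hT : T ≤ K * (k:ℝ) ^ (-(2 * (r:ℝ))) := by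
    have h := htail k hk1
    have : T = ∑' j : ℕ, (b (k + 1 + j)) ^ 2 := by
      apply tsum_congr; intro i; congr 2; omega
    rw [this]; exact h
  -- rpow bound on k^{-2r}
  have hkpow : (k:ℝ) ^ (-(2 * (r:ℝ))) ≤ 4^r * L := by
    have h1 : (k:ℝ) ^ (-(2 * (r:ℝ))) ≤ (x/2) ^ (-(2 * (r:ℝ))) :=
      Real.rpow_le_rpow_of_nonpos (by positivity) hk_half
        (neg_nonpos.mpr (by positivity))
    have h2 : (x/2) ^ (-(2 * (r:ℝ))) = x ^ (-(2 * (r:ℝ))) * (2:ℝ) ^ (2 * (r:ℝ)) := by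
      rw [Real.div_rpow hx0.le (by norm_num), Real.rpow_neg (by norm_num : (0:ℝ) ≤ 2)]
      field_simp
    have h3 : x ^ (-(2 * (r:ℝ))) = L := by
      rw [hxdef, hLdef, ← Real.rpow_mul hlam0.le]
      congr 1; ring
    have h4 : (2:ℝ) ^ (2 * (r:ℝ)) = 4^r := by
      rw [show (2*(r:ℝ)) = ((2*r : ℕ):ℝ) by push_cast; ring, Real.rpow_natCast, pow_mul]
      norm_num
    calc (k:ℝ) ^ (-(2 * (r:ℝ))) ≤ (x/2) ^ (-(2 * (r:ℝ))) := h1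
      _ = L * 4^r := by rw [h2, h3, h4]
      _ = 4^r * L := by ring
  have hkpow0 : (0:ℝ) < (k:ℝ) ^ (-(2 * (r:ℝ))) := Real.rpow_pos_of_pos hk0 _
  have h6 : (0:ℝ) < (4:ℝ)^r * L := by positivity
  have hTbound : T ≤ (|K|+1) * 4^r * L := by
    have hKabs : K * (k:ℝ) ^ (-(2 * (r:ℝ))) ≤ |K| * (k:ℝ) ^ (-(2 * (r:ℝ))) :=
      mul_le_mul_of_nonneg_right (le_abs_self K) hkpow0.le
    have h5 : |K| * (k:ℝ) ^ (-(2 * (r:ℝ))) ≤ |K| * (4^r * L) :=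
      mul_le_mul_of_nonneg_left hkpow (abs_nonneg K)
    have h7 : |K| * (4^r * L) ≤ (|K|+1) * (4^r * L) :=
      mul_le_mul_of_nonneg_right (by linarith [abs_nonneg K]) h6.le
    calc T ≤ K * (k:ℝ) ^ (-(2 * (r:ℝ))) := hT
      _ ≤ |K| * (k:ℝ) ^ (-(2 * (r:ℝ))) := hKabs
      _ ≤ |K| * (4^r * L) := h5
      _ ≤ (|K|+1) * (4^r * L) := h7
      _ = (|K|+1) * 4^r * L := by ring
  -- lower bound on the finite sum
  have hterm : ∀ j ∈ Finset.range k,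
      ((1+c)⁻¹)^2 * (b (j + 1)) ^ 2 ≤ (1 / (1 + lam * ω (j + 1))) ^ 2 * (b (j + 1)) ^ 2 := by
    intro j hj
    have hjk : j + 1 ≤ k := Finset.mem_range.mp hj
    have hc' : lam * ω (j+1) ≤ c := key (j+1) (Nat.le_add_left 1 j) hjk
    have h1 : (1+c)⁻¹ ≤ 1 / (1 + lam * ω (j+1)) := by
      rw [one_div]
      apply inv_anti₀ (hfact j)
      linarith
    have h2 : ((1+c)⁻¹)^2 ≤ (1 / (1 + lam * ω (j+1)))^2 :=
      pow_le_pow_left₀ (by positivity) h1 2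
    exact mul_le_mul_of_nonneg_right h2 (sq_nonneg _)
  have hfin : ∑ j ∈ Finset.range k, (1 / (1 + lam * ω (j + 1))) ^ 2 * (b (j + 1)) ^ 2
      ≤ ∑' j : ℕ, (1 / (1 + lam * ω (j + 1))) ^ 2 * (b (j + 1)) ^ 2 :=
    Summable.sum_le_tsum _ (fun j _ => mul_nonneg (sq_nonneg _) (sq_nonneg _)) hsum2
  have hfin2 : ((1+c)⁻¹)^2 * (S - T)
      ≤ ∑ j ∈ Finset.range k, (1 / (1 + lam * ω (j + 1))) ^ 2 * (b (j + 1)) ^ 2 := by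
    rw [← hsplit', Finset.mul_sum]
    exact Finset.sum_le_sum hterm
  have hC1 : (0:ℝ) < ((1+c)⁻¹)^2 := by positivity
  have hfinal : ((1+c)⁻¹)^2 * T ≤ ((1+c)⁻¹)^2 * ((|K|+1) * 4^r) * L := by
    calc ((1+c)⁻¹)^2 * T ≤ ((1+c)⁻¹)^2 * ((|K|+1) * 4^r * L) :=
          mul_le_mul_of_nonneg_left hTbound hC1.le
      _ = ((1+c)⁻¹)^2 * ((|K|+1) * 4^r) * L := by ring
  calc ((1+c)⁻¹)^2 * S - ((1+c)⁻¹)^2 * ((|K|+1) * 4^r) * L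
      ≤ ((1+c)⁻¹)^2 * S - ((1+c)⁻¹)^2 * T := by linarith
    _ = ((1+c)⁻¹)^2 * (S - T) := by ring
    _ ≤ _ := le_trans hfin2 hfin
end
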